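/- Let R₁ be a finite non-commutative ring with Z(R₁) = {0}, and let R₂ be a finite commutative ring. Then γ(Γ(R₁ × R₂)) = γ(Γ(R₁)). -/

import Mathlib

/-!
Since `R₂` is commutative, `Z(R₁ × R₂) = Z(R₁) × R₂`, so `(a, b)` is a vertex of `Γ(R₁ × R₂)`
exactly when `a` is a vertex of `Γ(R₁)`. A dominating set `D` of `Γ(R₁)` gives the dominating set
`D × {0}`, because `(a, 0)` commutes with `(b, c)` whenever `a` commutes with `b`. Conversely the
first projection of a dominating set of `Γ(R₁ × R₂)` dominates `Γ(R₁)`, as one sees by testing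
it on the vertices `(a, 0)`.
-/

open scoped Classical

noncomputable section

/-- The commuting graph of a (non-unital, possibly non-commutative) ring `R`:
vertices are the non-central elements, and two distinct vertices are adjacent
iff they commute. -/
def commutingGraph (R : Type*) [NonUnitalRing R] :
    SimpleGraph {x : R // x ∉ Set.center R} where
  Adj a b := a ≠ b ∧ (a : R) * b = (b : R) * a
  symm := by constructor; rintro a b ⟨h1, h2⟩; exact ⟨h1.symm, h2.symm⟩
  loopless := by constructor; rintro a ⟨h, -⟩; exact h rfl

/-- A dominating set: every vertex not in `D` is adjacent to some vertex of `D`. -/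
def SimpleGraph.IsDominatingSet {V : Type*} (G : SimpleGraph V) (D : Finset V) : Prop :=
  ∀ v, v ∉ D → ∃ u ∈ D, G.Adj u v

/-- The domination number: the minimum cardinality of a dominating set. -/
noncomputable def SimpleGraph.dominationNumber {V : Type*} [Fintype V] (G : SimpleGraph V) : ℕ :=
  sInf {n | ∃ D : Finset V, G.IsDominatingSet D ∧ D.card = n}

/-- The signed domination number: the minimum total weight of a function
`f : V → {-1, 1}` whose sum over every closed neighbourhood is at least `1`. -/
noncomputable def SimpleGraph.signedDominationNumber {V : Type*} [Fintype V]
    (G : SimpleGraph V) : ℤ :=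
  sInf {w : ℤ | ∃ f : V → ℤ, (∀ v, f v = 1 ∨ f v = -1) ∧
    (∀ v : V, 1 ≤ ∑ u ∈ Finset.univ.filter (fun u => G.Adj v u ∨ u = v), f u) ∧
    w = ∑ v, f v}

/-- Underlying type of the ring `E`. -/
def Ering : Type := ZMod 2 × ZMod 2

instance : Fintype Ering := inferInstanceAs (Fintype (ZMod 2 × ZMod 2))
instance : DecidableEq Ering := inferInstanceAs (DecidableEq (ZMod 2 × ZMod 2))
instance : AddCommGroup Ering := inferInstanceAs (AddCommGroup (ZMod 2 × ZMod 2))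
instance : Mul Ering := ⟨fun a b => (b.1 * a.1, b.1 * a.2)⟩

/-- `E = ⟨x,y : 2x=2y=0, x²=x, y²=y, xy=x, yx=y⟩`, realized on `ZMod 2 × ZMod 2`
with `x = (1,0)`, `y = (1,1)` and multiplication `a * b = (b₁a₁, b₁a₂)`. -/
instance : NonUnitalRing Ering :=
  { (inferInstance : AddCommGroup Ering), (inferInstance : Mul Ering) with
    left_distrib := by decide
    right_distrib := by decide
    zero_mul := by decide
    mul_zero := by decide
    mul_assoc := by decide }

/-- Underlying type of the ring `F`. -/
def Fring : Type := ZMod 2 × ZMod 2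

instance : Fintype Fring := inferInstanceAs (Fintype (ZMod 2 × ZMod 2))
instance : DecidableEq Fring := inferInstanceAs (DecidableEq (ZMod 2 × ZMod 2))
instance : AddCommGroup Fring := inferInstanceAs (AddCommGroup (ZMod 2 × ZMod 2))
instance : Mul Fring := ⟨fun a b => (a.1 * b.1, a.1 * b.2)⟩

/-- `F = ⟨x,y : 2x=2y=0, x²=x, y²=y, xy=y, yx=x⟩`, realized on `ZMod 2 × ZMod 2`
with `x = (1,0)`, `y = (1,1)` and multiplication `a * b = (a₁b₁, a₁b₂)`. -/
instance : NonUnitalRing Fring :=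
  { (inferInstance : AddCommGroup Fring), (inferInstance : Mul Fring) with
    left_distrib := by decide
    right_distrib := by decide
    zero_mul := by decide
    mul_zero := by decide
    mul_assoc := by decide }

namespace SimpleGraph

variable {V W : Type*} {G : SimpleGraph V} {H : SimpleGraph W}

/-- A vertex `w` outside `D.image f` is dominated by the image of whatever dominates `g w`. -/
lemma IsDominatingSet.image {D : Finset V} (hD : G.IsDominatingSet D) (f : V → W) (g : W → V)
    (hfg : ∀ v w, (v = g w ∨ G.Adj v (g w)) → f v = w ∨ H.Adj (f v) w) :
    H.IsDominatingSet (D.image f) := by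
  intro w hw
  have hnear : ∃ v ∈ D, v = g w ∨ G.Adj v (g w) := by
    by_cases hgw : g w ∈ D
    · exact ⟨g w, hgw, .inl rfl⟩
    · obtain ⟨v, hv, hadj⟩ := hD (g w) hgw
      exact ⟨v, hv, .inr hadj⟩
  obtain ⟨v, hv, hvw⟩ := hnear
  refine ⟨f v, Finset.mem_image_of_mem f hv, (hfg v w hvw).resolve_left ?_⟩
  rintro rfl
  exact hw (Finset.mem_image_of_mem f hv)

lemma dominationNumber_le_card [Fintype V] {D : Finset V} (hD : G.IsDominatingSet D) :
    G.dominationNumber ≤ D.card :=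
  Nat.sInf_le ⟨D, hD, rfl⟩

lemma exists_isDominatingSet_card_eq_dominationNumber [Fintype V] :
    ∃ D : Finset V, G.IsDominatingSet D ∧ D.card = G.dominationNumber :=
  Nat.sInf_mem (s := {n | ∃ D : Finset V, G.IsDominatingSet D ∧ D.card = n})
    ⟨_, Finset.univ, fun v hv => absurd (Finset.mem_univ v) hv, rfl⟩

lemma dominationNumber_le_of_map [Fintype V] [Fintype W] (f : V → W) (g : W → V)
    (hfg : ∀ v w, (v = g w ∨ G.Adj v (g w)) → f v = w ∨ H.Adj (f v) w) :
    H.dominationNumber ≤ G.dominationNumber := by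
  obtain ⟨D, hD, hcard⟩ := G.exists_isDominatingSet_card_eq_dominationNumber
  calc H.dominationNumber ≤ (D.image f).card := dominationNumber_le_card (hD.image f g hfg)
    _ ≤ D.card := Finset.card_image_le
    _ = G.dominationNumber := hcard

end SimpleGraph

lemma Set.mem_center_prod_iff_of_mul_comm {M N : Type*} [Mul M] [Semigroup N]
    (hcomm : ∀ a b : N, a * b = b * a) {p : M × N} :
    p ∈ Set.center (M × N) ↔ p.1 ∈ Set.center M := by
  rw [Set.center_prod, Set.mem_prod,
    and_iff_left (Semigroup.mem_center_iff.mpr fun b => hcomm b p.2)]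

namespace commutingGraph

variable {R₁ R₂ : Type*} [NonUnitalRing R₁] [NonUnitalRing R₂]

def inl (a : {x : R₁ // x ∉ Set.center R₁}) : {x : R₁ × R₂ // x ∉ Set.center (R₁ × R₂)} :=
  ⟨((a : R₁), (0 : R₂)), fun h => a.2 (Set.center_prod (M := R₁) (N := R₂) ▸ h).1⟩

def fst (hcomm : ∀ a b : R₂, a * b = b * a) (p : {x : R₁ × R₂ // x ∉ Set.center (R₁ × R₂)}) :
    {x : R₁ // x ∉ Set.center R₁} :=
  ⟨p.1.1, fun h => p.2 ((Set.mem_center_prod_iff_of_mul_comm hcomm).mpr h)⟩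

variable [Fintype R₁] [Fintype R₂]

lemma dominationNumber_prod_le (hcomm : ∀ a b : R₂, a * b = b * a) :
    (commutingGraph (R₁ × R₂)).dominationNumber ≤ (commutingGraph R₁).dominationNumber := by
  refine SimpleGraph.dominationNumber_le_of_map inl (fst hcomm) ?_
  rintro a ⟨⟨b, c⟩, hbc⟩ hab
  have hab' : (a : R₁) * b = b * a := by
    rcases hab with rfl | ⟨-, h⟩
    · rfl
    · exact h
  exact or_iff_not_imp_left.mpr fun hne => ⟨hne, Prod.ext hab' (by simp [inl])⟩

lemma dominationNumber_le_prod (hcomm : ∀ a b : R₂, a * b = b * a) :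
    (commutingGraph R₁).dominationNumber ≤ (commutingGraph (R₁ × R₂)).dominationNumber := by
  refine SimpleGraph.dominationNumber_le_of_map (fst hcomm) inl ?_
  rintro p a (rfl | ⟨-, hpa⟩)
  · exact .inl rfl
  · exact or_iff_not_imp_left.mpr fun hne => ⟨hne, congrArg Prod.fst hpa⟩

end commutingGraph

theorem stmt_15_general (R₁ R₂ : Type*) [NonUnitalRing R₁] [Fintype R₁]
    [NonUnitalRing R₂] [Fintype R₂]
    (hcomm : ∀ a b : R₂, a * b = b * a) :
    (commutingGraph (R₁ × R₂)).dominationNumber = (commutingGraph R₁).dominationNumber :=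
  le_antisymm (commutingGraph.dominationNumber_prod_le hcomm)
    (commutingGraph.dominationNumber_le_prod hcomm)

/-- If `R₁` is non-commutative with trivial center and `R₂` is commutative, then
`γ(Γ(R₁ × R₂)) = γ(Γ(R₁))`. -/
theorem stmt_15 (R₁ R₂ : Type*) [NonUnitalRing R₁] [Fintype R₁]
    [NonUnitalRing R₂] [Fintype R₂]
    (hnc : ∃ x y : R₁, x * y ≠ y * x)
    (hz : Set.center R₁ = {0})
    (hcomm : ∀ a b : R₂, a * b = b * a) :
    (commutingGraph (R₁ × R₂)).dominationNumber = (commutingGraph R₁).dominationNumber :=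
  stmt_15_general R₁ R₂ hcomm

end
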